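/- Let $\varepsilon \in (0,1]$, let $\beta \geq 0$ be an integer, and suppose $\beta+1$ bins together contain at least $\lceil (\beta+1)/\varepsilon \rceil$ items, where one designated bin is 'non-good' and the rest are 'good'. Then there exists a set of at most $\lceil \varepsilon\beta \rceil$ good bins which, together with the designated non-good bin, contain at least $\beta$ of the items. -/
import Mathlib

lemma exists_topk {α : Type*} [DecidableEq α] (f : α → ℕ) :
    ∀ (k : ℕ) (s : Finset α), k ≤ s.card →
      ∃ t, t ⊆ s ∧ t.card = k ∧ ∀ i ∈ s, i ∉ t → ∀ j ∈ t, f i ≤ f j := by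
  intro k
  induction k with
  | zero => intro s _; exact ⟨∅, Finset.empty_subset s, Finset.card_empty, by simp⟩
  | succ k ih =>
    intro s hk
    have hne : s.Nonempty := Finset.card_pos.mp (by omega)
    obtain ⟨a, ha, hamax⟩ := Finset.exists_max_image s f hne
    have hcard : k ≤ (s.erase a).card := by
      rw [Finset.card_erase_of_mem ha]; omega
    obtain ⟨t, hts, htc, hmin⟩ := ih (s.erase a) hcard
    have hat : a ∉ t := fun h => (Finset.mem_erase.mp (hts h)).1 rfl
    refine ⟨insert a t, ?_, ?_, ?_⟩
    · exact Finset.insert_subset ha (hts.trans (Finset.erase_subset _ _))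
    · rw [Finset.card_insert_of_notMem hat, htc]
    · intro i hi hit j hj
      rcases Finset.mem_insert.mp hj with rfl | hjt
      · exact hamax i hi
      · have hia : i ≠ a := fun h => hit (h ▸ Finset.mem_insert_self a t)
        exact hmin i (Finset.mem_erase.mpr ⟨hia, hi⟩) (fun h => hit (Finset.mem_insert_of_mem h)) j hjt

lemma topk_sum {α : Type*} [DecidableEq α] (s t : Finset α) (f : α → ℕ) (hts : t ⊆ s)
    (hmin : ∀ i ∈ s, i ∉ t → ∀ j ∈ t, f i ≤ f j) :
    t.card * ∑ i ∈ s, f i ≤ s.card * ∑ i ∈ t, f i := by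
  have hsplit : ∑ i ∈ s \ t, f i + ∑ i ∈ t, f i = ∑ i ∈ s, f i :=
    Finset.sum_sdiff hts
  have hcard : (s \ t).card = s.card - t.card := Finset.card_sdiff_of_subset hts
  have hkn : t.card ≤ s.card := Finset.card_le_card hts
  have key : t.card * ∑ i ∈ s \ t, f i ≤ (s \ t).card * ∑ j ∈ t, f j := by
    rw [Finset.mul_sum]
    calc ∑ i ∈ s \ t, t.card * f i ≤ ∑ _i ∈ s \ t, ∑ j ∈ t, f j := by
          refine Finset.sum_le_sum ?_
          intro i hi
          have hi' := Finset.mem_sdiff.mp hi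
          calc t.card * f i = ∑ _j ∈ t, f i := by rw [Finset.sum_const, smul_eq_mul]
          _ ≤ ∑ j ∈ t, f j := Finset.sum_le_sum (fun j hj => hmin i hi'.1 hi'.2 j hj)
      _ = (s \ t).card * ∑ j ∈ t, f j := by rw [Finset.sum_const, smul_eq_mul]
  calc t.card * ∑ i ∈ s, f i
      = t.card * ∑ i ∈ s \ t, f i + t.card * ∑ i ∈ t, f i := by
        rw [← hsplit, Nat.mul_add]
    _ ≤ (s \ t).card * ∑ i ∈ t, f i + t.card * ∑ i ∈ t, f i := by
        exact Nat.add_le_add_right key _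
    _ = s.card * ∑ i ∈ t, f i := by
        rw [hcard, ← Nat.add_mul]; congr 1; omega

theorem pigeonhole_large_items (ε : ℝ) (hε0 : 0 < ε) (hε1 : ε ≤ 1) (β : ℕ)
    (count : Fin (β + 1) → ℕ) (d : Fin (β + 1))
    (htotal : ⌈((β : ℝ) + 1) / ε⌉₊ ≤ ∑ i, count i) :
    ∃ G : Finset (Fin (β + 1)), d ∉ G ∧ G.card ≤ ⌈ε * (β : ℝ)⌉₊ ∧
      β ≤ ∑ i ∈ insert d G, count i := by
  rcases Nat.eq_zero_or_pos β with hβ0 | hβpos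
  · exact ⟨∅, Finset.notMem_empty d, by simp, by simp [hβ0]⟩
  set s : Finset (Fin (β + 1)) := Finset.univ.erase d with hs
  have hscard : s.card = β := by
    rw [hs, Finset.card_erase_of_mem (Finset.mem_univ d), Finset.card_univ,
      Fintype.card_fin]
    omega
  set k : ℕ := min ⌈ε * (β : ℝ)⌉₊ β with hk
  have hks : k ≤ s.card := by rw [hscard]; exact min_le_right _ _
  obtain ⟨t, hts, htc, hmin⟩ := exists_topk count k s hks
  have hdt : d ∉ t := fun h => (Finset.mem_erase.mp (hts h)).1 rfl
  refine ⟨t, hdt, by rw [htc]; exact min_le_left _ _, ?_⟩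
  rw [Finset.sum_insert hdt]
  -- notation
  set S : ℕ := ∑ i ∈ s, count i with hS
  set Tt : ℕ := ∑ i ∈ t, count i with hTt
  have hsum : count d + S = ∑ i, count i := Finset.add_sum_erase _ count (Finset.mem_univ d)
  have hT : ((β : ℝ) + 1) / ε ≤ (count d : ℝ) + (S : ℝ) := by
    have := Nat.ceil_le.mp htotal
    rw [← hsum] at this
    exact_mod_cast this
  have h1 : (β : ℝ) + 1 ≤ ε * (count d : ℝ) + ε * (S : ℝ) := by
    have := (div_le_iff₀ hε0).mp hT
    nlinarith
  have h2 : ε * (β : ℝ) ≤ (k : ℝ) := by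
    rcases le_or_gt (⌈ε * (β : ℝ)⌉₊) β with hle | hlt
    · have : k = ⌈ε * (β : ℝ)⌉₊ := min_eq_left hle
      rw [this]; exact Nat.le_ceil _
    · have : k = β := min_eq_right hlt.le
      rw [this]
      have h0 : (0 : ℝ) < (β : ℝ) := by exact_mod_cast hβpos
      nlinarith
  have h3 : (k : ℝ) * (S : ℝ) ≤ (β : ℝ) * (Tt : ℝ) := by
    have := topk_sum s t count hts hmin
    rw [htc, hscard] at this
    exact_mod_cast this
  have hβR : (1 : ℝ) ≤ (β : ℝ) := by exact_mod_cast hβpos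
  have hcd : (0 : ℝ) ≤ (count d : ℝ) := Nat.cast_nonneg _
  have hSnn : (0 : ℝ) ≤ (S : ℝ) := Nat.cast_nonneg _
  have hfinal : (β : ℝ) ≤ (count d : ℝ) + (Tt : ℝ) := by
    have hβpos' : (0 : ℝ) < (β : ℝ) := by exact_mod_cast hβpos
    nlinarith [mul_le_mul_of_nonneg_right h2 hSnn,
      mul_le_mul_of_nonneg_left h1 (le_trans zero_le_one hβR),
      mul_nonneg (mul_nonneg (by linarith : (0:ℝ) ≤ 1 - ε) hβpos'.le) hcd]
  exact_mod_cast hfinal
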